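/- arXiv:0810.5177 — 3 statements merged into one kernel-verified Lean document; each statement's English description precedes it below -/
import Mathlib

section
/- Assume $B + E = A$ and that $B \cap E$ is finite, of cardinality $n$. Then for every $G$-fixed element $a \in A^G$, the element $n\cdot a$ lies in $B^G + E^G$; equivalently, the quotient group $A^G/(B^G + E^G)$ is annihilated by $n = |B \cap E|$. -/
/-!
Write the fixed element `a` as `b + e` with `b ∈ B`, `e ∈ E`. For `g ∈ G` the defect
`g • b - b = e - g • e` lies in `B ⊓ E`, so it is killed by `n = |B ⊓ E|`; hence `n • b` and
`n • e` are fixed, and `n • a = n • b + n • e`.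
-/

theorem AddSubgroup.card_nsmul_eq_zero_of_mem {A : Type*} [AddGroup A] {H : AddSubgroup A}
    {x : A} (hx : x ∈ H) : Nat.card H • x = 0 := by
  have h := congrArg Subtype.val (card_nsmul_eq_zero' (x := (⟨x, hx⟩ : H)))
  rwa [AddSubgroup.coe_nsmul, AddSubgroup.coe_zero] at h

section StableDecomposition

variable {M A : Type*} [Monoid M] [AddCommGroup A] [DistribMulAction M A]
  {B E : AddSubgroup A} {g : M} {b e : A}

theorem smul_sub_self_mem_inf_of_smul_add_eq (hB : ∀ x ∈ B, g • x ∈ B)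
    (hE : ∀ x ∈ E, g • x ∈ E) (hb : b ∈ B) (he : e ∈ E) (h : g • (b + e) = b + e) :
    g • b - b ∈ B ⊓ E := by
  have hdefect : g • b - b = e - g • e := by
    rw [smul_add] at h
    rw [sub_eq_sub_iff_add_eq_add, add_comm e, h, add_comm]
  exact AddSubgroup.mem_inf.mpr ⟨sub_mem (hB b hb) hb, hdefect ▸ sub_mem he (hE e he)⟩

end StableDecomposition

theorem smul_nsmul_eq_of_nsmul_smul_sub_self_eq_zero {M A : Type*} [Monoid M] [AddCommGroup A]
    [DistribMulAction M A] {g : M} {x : A} {n : ℕ} (h : n • (g • x - x) = 0) :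
    g • (n • x) = n • x := by
  rw [smul_sub, sub_eq_zero] at h
  rw [smul_comm, h]

theorem stmt1_general {G A : Type*} [Group G] [AddCommGroup A] [DistribMulAction G A]
    (B E : AddSubgroup A)
    (hB : ∀ (g : G), ∀ x ∈ B, g • x ∈ B)
    (hE : ∀ (g : G), ∀ x ∈ E, g • x ∈ E)
    (hBE : B ⊔ E = ⊤)
    (n : ℕ) (hn : Nat.card ↥(B ⊓ E) = n)
    (a : A) (ha : ∀ g : G, g • a = a) :
    ∃ b ∈ B, ∃ e ∈ E, (∀ g : G, g • b = b) ∧ (∀ g : G, g • e = e) ∧ n • a = b + e := by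
  obtain ⟨b, hb, e, he, rfl⟩ := AddSubgroup.mem_sup.mp (hBE ▸ AddSubgroup.mem_top a)
  subst hn
  refine ⟨_, nsmul_mem hb _, _, nsmul_mem he _, fun g => ?_, fun g => ?_, nsmul_add _ _ _⟩
  · exact smul_nsmul_eq_of_nsmul_smul_sub_self_eq_zero <| AddSubgroup.card_nsmul_eq_zero_of_mem <|
      smul_sub_self_mem_inf_of_smul_add_eq (hB g) (hE g) hb he (ha g)
  · refine smul_nsmul_eq_of_nsmul_smul_sub_self_eq_zero <| AddSubgroup.card_nsmul_eq_zero_of_mem ?_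
    rw [inf_comm]
    exact smul_sub_self_mem_inf_of_smul_add_eq (hE g) (hB g) he hb (add_comm b e ▸ ha g)

/-- Let `G` act on an abelian group `A` by additive automorphisms and
let `B`, `E` be `G`-stable subgroups with `B + E = A` and `B ∩ E` finite of cardinality
`n`.  Then for every `G`-fixed `a ∈ A`, the element `n • a` lies in `Bᴳ + Eᴳ`,
i.e. `n • a = b + e` with `b ∈ B`, `e ∈ E` both `G`-fixed. -/
theorem stmt1 {G A : Type*} [Group G] [AddCommGroup A] [DistribMulAction G A]
    (B E : AddSubgroup A)
    (hB : ∀ (g : G), ∀ x ∈ B, g • x ∈ B)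
    (hE : ∀ (g : G), ∀ x ∈ E, g • x ∈ E)
    (hBE : B ⊔ E = ⊤)
    (hfin : Finite ↥(B ⊓ E)) (n : ℕ) (hn : Nat.card ↥(B ⊓ E) = n)
    (a : A) (ha : ∀ g : G, g • a = a) :
    ∃ b ∈ B, ∃ e ∈ E, (∀ g : G, g • b = b) ∧ (∀ g : G, g • e = e) ∧ n • a = b + e :=
  stmt1_general B E hB hE hBE n hn a ha
end

section
/- Assume $B + E = A$ and that $B \cap E$ is finite, of cardinality $n$. Let $c : G \to B$ be a 1-cocycle with values in $B$ such that $c$ becomes a coboundary in $A$, i.e. there exists $a \in A$ with $c(g) = g\cdot a - a$ for all $g \in G$. Then $n\cdot c$ is a coboundary in $B$: there exists $b \in B$ with $n\cdot c(g) = g\cdot b - b$ for all $g \in G$. -/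
/-!
Write `a = b₀ + e` with `b₀ ∈ B` and `e ∈ E`. Then `c g = (g • b₀ - b₀) + (g • e - e)`, and the
second summand lies in `B` (as the difference of two elements of `B`) and in `E`, hence in the
group `B ∩ E` of order `n`, so it is killed by `n`. Thus `n • c` is the coboundary of `n • b₀ ∈ B`.
-/

theorem smul_sub_self_mem_inf_of_smul_add_sub_mem {G A : Type*} [Group G] [AddCommGroup A]
    [DistribMulAction G A] {B E : AddSubgroup A} (hB : ∀ (g : G), ∀ x ∈ B, g • x ∈ B)
    (hE : ∀ (g : G), ∀ x ∈ E, g • x ∈ E) {b e : A} (hb : b ∈ B) (he : e ∈ E) (g : G)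
    (h : g • (b + e) - (b + e) ∈ B) :
    g • e - e ∈ B ⊓ E := by
  have hsplit : g • e - e = (g • (b + e) - (b + e)) - (g • b - b) := by
    rw [smul_add]; abel
  refine ⟨?_, E.sub_mem (hE g e he) he⟩
  rw [hsplit]
  exact B.sub_mem h (B.sub_mem (hB g b hb) hb)

theorem stmt5_general {G A : Type*} [Group G] [AddCommGroup A] [DistribMulAction G A]
    (B E : AddSubgroup A)
    (hB : ∀ (g : G), ∀ x ∈ B, g • x ∈ B)
    (hE : ∀ (g : G), ∀ x ∈ E, g • x ∈ E)
    (hBE : B ⊔ E = ⊤)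
    (n : ℕ) (hn : Nat.card ↥(B ⊓ E) = n)
    (c : G → A)
    (hcB : ∀ g : G, c g ∈ B)
    (a : A) (ha : ∀ g : G, c g = g • a - a) :
    ∃ b ∈ B, ∀ g : G, n • c g = g • b - b := by
  obtain ⟨b₀, hb₀, e, he, rfl⟩ := AddSubgroup.mem_sup.mp (hBE ▸ AddSubgroup.mem_top a)
  refine ⟨n • b₀, B.nsmul_mem hb₀ n, fun g => ?_⟩
  have hmem : g • e - e ∈ B ⊓ E :=
    smul_sub_self_mem_inf_of_smul_add_sub_mem hB hE hb₀ he g (ha g ▸ hcB g)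
  have htorsion : n • (g • e - e) = 0 :=
    hn ▸ addOrderOf_dvd_iff_nsmul_eq_zero.mp ((B ⊓ E).addOrderOf_dvd_natCard hmem)
  calc n • c g
      _ = n • (g • b₀ - b₀) + n • (g • e - e) := by
        rw [← nsmul_add, ha, smul_add, sub_add_sub_comm]
      _ = g • (n • b₀) - n • b₀ := by rw [htorsion, add_zero, nsmul_sub, smul_comm]

/-- Let `G` act on an abelian group `A` by additive automorphisms and
let `B`, `E` be `G`-stable subgroups with `B + E = A` and `B ∩ E` finite of cardinality
`n`.  If `c : G → A` is a 1-cocycle with values in `B` which is a coboundary in `A`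
(say `c g = g • a - a`), then `n • c` is a coboundary in `B`: there is `b ∈ B` with
`n • c g = g • b - b` for all `g`. -/
theorem stmt5 {G A : Type*} [Group G] [AddCommGroup A] [DistribMulAction G A]
    (B E : AddSubgroup A)
    (hB : ∀ (g : G), ∀ x ∈ B, g • x ∈ B)
    (hE : ∀ (g : G), ∀ x ∈ E, g • x ∈ E)
    (hBE : B ⊔ E = ⊤)
    (hfin : Finite ↥(B ⊓ E)) (n : ℕ) (hn : Nat.card ↥(B ⊓ E) = n)
    (c : G → A)
    (hcB : ∀ g : G, c g ∈ B)
    (hcoc : ∀ g h : G, c (g * h) = c g + g • c h)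
    (a : A) (ha : ∀ g : G, c g = g • a - a) :
    ∃ b ∈ B, ∀ g : G, n • c g = g • b - b :=
  stmt5_general B E hB hE hBE n hn c hcB a ha
end

section
/- (Abstract form of Lemma 3.2 of the paper.) Assume $B + E = A$ and that $B \cap E$ is finite. If $q$ is a prime number that divides the order of some finite-order element of $\ker\big(H^1(G, B) \to H^1(G, A)\big)$, where the map on cohomology is induced by the inclusion $B \hookrightarrow A$, then $q$ divides the cardinality $|B \cap E|$. -/
/-!
A class in the kernel of `H¹(G, B) → H¹(G, A)` is represented by a cocycle `g ↦ g • s - s`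
with `s ∈ A`. Writing `s = b + e` with `b ∈ B`, `e ∈ E`, and subtracting the `B`-coboundary
of `b`, the class is represented by `g ↦ g • e - e`, which takes values in
`B ⊓ E`. Hence the class is killed by `|B ⊓ E|`, so its order divides `|B ⊓ E|`.
-/

variable (G : Type*) [Group G]

/-- 1-cocycles `c : G → A` with values in the subgroup `S`. -/
def cocyclesIn (A : Type*) [AddCommGroup A] [DistribMulAction G A] (S : AddSubgroup A) :
    AddSubgroup (G → A) where
  carrier := {c | (∀ g : G, c g ∈ S) ∧ ∀ g h : G, c (g * h) = c g + g • c h}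
  zero_mem' := ⟨fun _ => S.zero_mem, by intro g h; simp⟩
  add_mem' := by
    rintro c d ⟨hcS, hc⟩ ⟨hdS, hd⟩
    refine ⟨fun g => S.add_mem (hcS g) (hdS g), fun g h => ?_⟩
    simp only [Pi.add_apply, hc g h, hd g h, smul_add]
    abel
  neg_mem' := by
    rintro c ⟨hcS, hc⟩
    refine ⟨fun g => S.neg_mem (hcS g), fun g h => ?_⟩
    simp only [Pi.neg_apply, hc g h, smul_neg]
    abel

/-- 1-coboundaries of elements of the subgroup `S`. -/
def coboundariesIn (A : Type*) [AddCommGroup A] [DistribMulAction G A] (S : AddSubgroup A) :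
    AddSubgroup (G → A) where
  carrier := {c | ∃ s ∈ S, ∀ g : G, c g = g • s - s}
  zero_mem' := ⟨0, S.zero_mem, by simp⟩
  add_mem' := by
    rintro c d ⟨s, hs, hcs⟩ ⟨t, ht, hdt⟩
    refine ⟨s + t, S.add_mem hs ht, fun g => ?_⟩
    simp only [Pi.add_apply, hcs g, hdt g, smul_add]
    abel
  neg_mem' := by
    rintro c ⟨s, hs, hcs⟩
    refine ⟨-s, S.neg_mem hs, fun g => ?_⟩
    simp only [Pi.neg_apply, hcs g, smul_neg]
    abel

/-- First group cohomology `H¹(G, S)` of a `G`-stable subgroup `S ⊆ A`: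
1-cocycles with values in `S` modulo 1-coboundaries of elements of `S`. -/
abbrev H1In (A : Type*) [AddCommGroup A] [DistribMulAction G A] (S : AddSubgroup A) :=
  cocyclesIn G A S ⧸ (coboundariesIn G A S).addSubgroupOf (cocyclesIn G A S)

/-- The map `H¹(G, S) →+ H¹(G, S')` induced by a `G`-equivariant homomorphism
`φ : A →+ A'` carrying `S` into `S'`. -/
def H1InMap {A A' : Type*} [AddCommGroup A] [DistribMulAction G A]
    [AddCommGroup A'] [DistribMulAction G A'] (φ : A →+ A')
    (hφ : ∀ (g : G) (a : A), φ (g • a) = g • φ a)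
    (S : AddSubgroup A) (S' : AddSubgroup A') (hS : ∀ a ∈ S, φ a ∈ S') :
    H1In G A S →+ H1In G A' S' :=
  QuotientAddGroup.map _ _
    ({ toFun := fun c =>
        ⟨fun g => φ (c.1 g),
          ⟨fun g => hS _ (c.2.1 g), fun g h => by
            show φ (c.1 (g * h)) = φ (c.1 g) + g • φ (c.1 h)
            rw [c.2.2 g h, map_add, hφ]⟩⟩
       map_zero' := by ext g; simp
       map_add' := fun c d => by ext g; simp } :
      ↥(cocyclesIn G A S) →+ ↥(cocyclesIn G A' S'))
    (by
      intro c hc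
      rw [AddSubgroup.mem_addSubgroupOf] at hc
      obtain ⟨s, hs, hcs⟩ := hc
      rw [AddSubgroup.mem_comap, AddSubgroup.mem_addSubgroupOf]
      exact ⟨φ s, hS s hs, fun g => by simp [hcs g, hφ]⟩)

section

variable {G}
variable {A : Type*} [AddCommGroup A] [DistribMulAction G A]

theorem coboundary_mem_cocyclesIn {S : AddSubgroup A} {e : A} (he : ∀ g : G, g • e - e ∈ S) :
    (fun g : G => g • e - e) ∈ cocyclesIn G A S := by
  refine ⟨he, fun g h => ?_⟩
  simp only [mul_smul, smul_sub]
  abel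

theorem card_nsmul_mk_eq_zero_of_forall_mem {S T : AddSubgroup A} (c : cocyclesIn G A S)
    (hc : ∀ g, c.1 g ∈ T) : Nat.card T • (QuotientAddGroup.mk c : H1In G A S) = 0 := by
  rw [← QuotientAddGroup.mk_nsmul, QuotientAddGroup.eq_zero_iff]
  suffices Nat.card T • c = 0 by rw [this]; exact zero_mem _
  ext g
  exact congrArg Subtype.val (card_nsmul_eq_zero' (G := T) (x := ⟨c.1 g, hc g⟩))

theorem exists_eq_coboundary_of_H1InMap_id_top_eq_zero {S : AddSubgroup A} (c : cocyclesIn G A S)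
    (hc : H1InMap G (AddMonoidHom.id A) (fun _ _ => rfl) S ⊤ (fun a _ => AddSubgroup.mem_top a)
      (QuotientAddGroup.mk c) = 0) :
    ∃ s : A, ∀ g : G, c.1 g = g • s - s := by
  rw [H1InMap, QuotientAddGroup.map_mk, QuotientAddGroup.eq_zero_iff,
    AddSubgroup.mem_addSubgroupOf] at hc
  obtain ⟨s, -, hcs⟩ := hc
  exact ⟨s, hcs⟩

theorem exists_cocycle_mem_inf_of_H1InMap_id_top_eq_zero {B E : AddSubgroup A}
    (hB : ∀ (g : G), ∀ x ∈ B, g • x ∈ B) (hE : ∀ (g : G), ∀ x ∈ E, g • x ∈ E)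
    (hBE : B ⊔ E = ⊤) (x : H1In G A B)
    (hx : H1InMap G (AddMonoidHom.id A) (fun _ _ => rfl) B ⊤ (fun a _ => AddSubgroup.mem_top a)
      x = 0) :
    ∃ d : cocyclesIn G A B, QuotientAddGroup.mk d = x ∧ ∀ g, d.1 g ∈ B ⊓ E := by
  obtain ⟨c, rfl⟩ := QuotientAddGroup.mk_surjective x
  obtain ⟨s, hcs⟩ := exists_eq_coboundary_of_H1InMap_id_top_eq_zero c hx
  obtain ⟨b, hb, e, he, rfl⟩ := AddSubgroup.mem_sup.mp (hBE ▸ AddSubgroup.mem_top s)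
  have hce : ∀ g : G, g • e - e = c.1 g - (g • b - b) := fun g => by
    rw [hcs g, smul_add]
    abel
  have heB : ∀ g : G, g • e - e ∈ B := fun g => by
    rw [hce g]
    exact B.sub_mem (c.2.1 g) (B.sub_mem (hB g b hb) hb)
  refine ⟨⟨_, coboundary_mem_cocyclesIn heB⟩, ?_, fun g => ⟨heB g, E.sub_mem (hE g e he) he⟩⟩
  rw [eq_comm, QuotientAddGroup.eq, AddSubgroup.mem_addSubgroupOf]
  refine ⟨-b, B.neg_mem hb, fun g => ?_⟩
  change -c.1 g + (g • e - e) = g • -b - -b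
  rw [hce g, smul_neg]
  abel

end

theorem stmt7_general {G A : Type*} [Group G] [AddCommGroup A] [DistribMulAction G A]
    (B E : AddSubgroup A)
    (hB : ∀ (g : G), ∀ x ∈ B, g • x ∈ B)
    (hE : ∀ (g : G), ∀ x ∈ E, g • x ∈ E)
    (hBE : B ⊔ E = ⊤)
    (q : ℕ)
    (x : H1In G A B)
    (hx : H1InMap G (AddMonoidHom.id A) (fun _ _ => rfl) B ⊤
      (fun a _ => AddSubgroup.mem_top a) x = 0)
    (hqx : q ∣ addOrderOf x) :
    q ∣ Nat.card ↥(B ⊓ E) := by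
  obtain ⟨d, rfl, hd⟩ := exists_cocycle_mem_inf_of_H1InMap_id_top_eq_zero hB hE hBE x hx
  exact hqx.trans (addOrderOf_dvd_of_nsmul_eq_zero (card_nsmul_mk_eq_zero_of_forall_mem d hd))

/-- abstract form of Lemma 3.2 of the paper.  Let `G` act on an
abelian group `A` by additive automorphisms and let `B`, `E` be `G`-stable subgroups
with `B + E = A` and `B ∩ E` finite.  If a prime `q` divides the order of some
finite-order element of `ker (H¹(G, B) → H¹(G, A))` (map induced by the inclusion
`B ↪ A`), then `q` divides `|B ∩ E|`. -/
theorem stmt7 {G A : Type*} [Group G] [AddCommGroup A] [DistribMulAction G A]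
    (B E : AddSubgroup A)
    (hB : ∀ (g : G), ∀ x ∈ B, g • x ∈ B)
    (hE : ∀ (g : G), ∀ x ∈ E, g • x ∈ E)
    (hBE : B ⊔ E = ⊤)
    (hfin : Finite ↥(B ⊓ E))
    (q : ℕ) (hq : q.Prime)
    (x : H1In G A B)
    (hx : H1InMap G (AddMonoidHom.id A) (fun _ _ => rfl) B ⊤
      (fun a _ => AddSubgroup.mem_top a) x = 0)
    (hfo : IsOfFinAddOrder x) (hqx : q ∣ addOrderOf x) :
    q ∣ Nat.card ↥(B ⊓ E) :=
  stmt7_general B E hB hE hBE q x hx hqx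
end
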